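/- arXiv:1502.01824 — 2 statements merged into one kernel-verified Lean document; each statement's English description precedes it below -/
import Mathlib

section
/- Let n ≥ 5. In the competition graph C(J_n(1)) of the finite Jaco graph J_n(1), two distinct vertices v_a and v_b with a < b are adjacent if and only if 3 ≤ a and b ≤ n−1 and the arc (v_a, v_b) is in J_n(1) and b ≠ a + d⁺_{J_n(1)}(v_a). Equivalently, C(J_n(1)) equals the subgraph of the underlying undirected graph of J_n(1) induced by {v_3, …, v_{n−1}}, minus the edges v_i v_{m_i} with m_i = i + d⁺_{J_n(1)}(v_i) for 3 ≤ i ≤ n−2, together with v_1, v_2 and v_n as isolated vertices. -/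
/-- In-degree of vertex `v_i` in the infinite Jaco graph `J_∞(1)`, defined by strong
recursion: `d⁻(v_i)` is the number of `k < i` with an arc `(v_k, v_i)`, where for `k < i`
the arc `(v_k, v_i)` is present iff `2k - d⁻(v_k) ≥ i` (and `k ≥ 1`). -/
noncomputable def jacoInDeg (n : ℕ) : ℕ :=
  Nat.strongRecOn n (fun n ih =>
    ((Finset.range n).attach.filter
      (fun k => 1 ≤ k.1 ∧ n ≤ 2 * k.1 - ih k.1 (Finset.mem_range.mp k.2))).card)

/-- The arc `(v_i, v_j)` of the infinite Jaco graph `J_∞(1)` (vertices indexed from 1):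
present iff `i < j` and `2i - d⁻(v_i) ≥ j`. -/
def jacoArc (i j : ℕ) : Prop :=
  1 ≤ i ∧ i < j ∧ j ≤ 2 * i - jacoInDeg i

noncomputable instance (i j : ℕ) : Decidable (jacoArc i j) := by unfold jacoArc; infer_instance

/-- Out-degree of `v_i` in the finite Jaco graph `J_n(1)` (vertex set `{v_1, …, v_n}`). -/
noncomputable  def jacoOutDeg (n i : ℕ) : ℕ :=
  ((Finset.Icc 1 n).filter (fun j => jacoArc i j)).card

/-- In-degree of `v_i` in the finite Jaco graph `J_n(1)`. -/
noncomputable def jacoInDegFin (n i : ℕ) : ℕ :=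
  ((Finset.Icc 1 n).filter (fun k => jacoArc k i)).card

/-- Adjacency in the competition graph `C(J_n(1))`: distinct vertices `v_a, v_b` of
`J_n(1)` are adjacent iff some vertex `v_w` of `J_n(1)` is a common out-neighbour. -/
def jacoCompAdj (n a b : ℕ) : Prop :=
  a ≠ b ∧ a ∈ Finset.Icc 1 n ∧ b ∈ Finset.Icc 1 n ∧
    ∃ w ∈ Finset.Icc 1 n, jacoArc a w ∧ jacoArc b w

/-! ### Auxiliary lemmas -/

/-- Unfolding equation for `jacoInDeg`. -/
lemma jacoInDeg_eq (n : ℕ) : jacoInDeg n =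
    ((Finset.range n).filter (fun k => 1 ≤ k ∧ n ≤ 2 * k - jacoInDeg k)).card := by
  conv_lhs => rw [jacoInDeg, Nat.strongRecOn_eq]
  have := Finset.filter_attach (fun m => 1 ≤ m ∧ n ≤ 2 * m - jacoInDeg m) (Finset.range n)
  change ((Finset.range n).attach.filter
      (fun k => (fun m => 1 ≤ m ∧ n ≤ 2 * m - jacoInDeg m) k.1)).card = _
  rw [this, Finset.card_map, Finset.card_attach]

/-- `jf i = 2i - d⁻(v_i)` is the largest index of an out-neighbour of `v_i` in `J_∞(1)`. -/
noncomputable def jf (i : ℕ) : ℕ := 2 * i - jacoInDeg i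

lemma jacoArc_iff (i j : ℕ) : jacoArc i j ↔ 1 ≤ i ∧ i < j ∧ j ≤ jf i := Iff.rfl

lemma jacoInDeg_le (n : ℕ) : jacoInDeg n ≤ n := by
  rw [jacoInDeg_eq]
  exact (Finset.card_filter_le _ _).trans (le_of_eq (Finset.card_range n))

lemma jacoInDeg_succ_le (n : ℕ) : jacoInDeg (n + 1) ≤ jacoInDeg n + 1 := by
  conv_lhs => rw [jacoInDeg_eq]
  conv_rhs => rw [jacoInDeg_eq]
  have hsub : (Finset.range (n+1)).filter (fun k => 1 ≤ k ∧ n + 1 ≤ 2 * k - jacoInDeg k)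
      ⊆ insert n ((Finset.range n).filter (fun k => 1 ≤ k ∧ n ≤ 2 * k - jacoInDeg k)) := by
    intro k hk
    simp only [Finset.mem_filter, Finset.mem_range, Finset.mem_insert] at hk ⊢
    rcases hk with ⟨hk1, hk2, hk3⟩
    rcases eq_or_lt_of_le (Nat.lt_succ_iff.mp hk1) with h | h
    · exact Or.inl h
    · exact Or.inr ⟨h, hk2, by omega⟩
  exact (Finset.card_le_card hsub).trans ((Finset.card_insert_le _ _).trans (by omega))

lemma jf_strictMono : StrictMono jf := by
  apply strictMono_nat_of_lt_succ
  intro n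
  have h1 := jacoInDeg_succ_le n
  have h2 := jacoInDeg_le n
  have h3 := jacoInDeg_le (n + 1)
  unfold jf
  omega

lemma jacoInDeg_one : jacoInDeg 1 = 0 := by
  rw [jacoInDeg_eq]
  rw [Finset.filter_eq_empty_iff.mpr, Finset.card_empty]
  intro k hk
  simp only [Finset.mem_range] at hk
  omega

lemma jf_one : jf 1 = 2 := by unfold jf; rw [jacoInDeg_one]

lemma jacoInDeg_two : jacoInDeg 2 = 1 := by
  rw [jacoInDeg_eq]
  have : (Finset.range 2).filter (fun k => 1 ≤ k ∧ 2 ≤ 2 * k - jacoInDeg k) = {1} := by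
    ext k
    simp only [Finset.mem_filter, Finset.mem_range, Finset.mem_singleton]
    constructor
    · rintro ⟨h1, h2, h3⟩; omega
    · rintro rfl; refine ⟨by norm_num, le_refl 1, ?_⟩; rw [jacoInDeg_one]
  rw [this, Finset.card_singleton]

lemma jf_two : jf 2 = 3 := by unfold jf; rw [jacoInDeg_two]

lemma jf_ge (a : ℕ) (ha : 1 ≤ a) : a + 1 ≤ jf a := by
  induction a, ha using Nat.le_induction with
  | base => rw [jf_one]
  | succ k hk ih => have := jf_strictMono (lt_add_one k); omega

lemma three_le_of (a b : ℕ) (ha : 1 ≤ a) (hab : a < b) (hf : b + 1 ≤ jf a) : 3 ≤ a := by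
  by_contra h
  push_neg at h
  interval_cases a
  · rw [jf_one] at hf; omega
  · rw [jf_two] at hf; omega

lemma outDeg_eq (n a : ℕ) (ha : 1 ≤ a) : jacoOutDeg n a = min (jf a) n - a := by
  unfold jacoOutDeg
  have : (Finset.Icc 1 n).filter (fun j => jacoArc a j) = Finset.Ioc a (min (jf a) n) := by
    ext j
    simp only [Finset.mem_filter, Finset.mem_Icc, Finset.mem_Ioc, jacoArc_iff]
    omega
  rw [this, Nat.card_Ioc]

/-- For `n ≥ 5`, two distinct vertices `v_a, v_b` (`a < b`) of `J_n(1)` are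
adjacent in the competition graph `C(J_n(1))` if and only if `3 ≤ a`, `b ≤ n - 1`, the arc
`(v_a, v_b)` is in `J_n(1)`, and `b ≠ a + d⁺_{J_n(1)}(v_a)`. -/
theorem competition_graph_of_Jaco (n : ℕ) (hn : 5 ≤ n) (a b : ℕ)
    (ha : 1 ≤ a) (hab : a < b) (hb : b ≤ n) :
    jacoCompAdj n a b ↔
      (3 ≤ a ∧ b ≤ n - 1 ∧ jacoArc a b ∧ b ≠ a + jacoOutDeg n a) := by
  have hout : a + jacoOutDeg n a = min (jf a) n := by
    have := jf_ge a ha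
    rw [outDeg_eq n a ha]
    omega
  constructor
  · rintro ⟨hne, ha', hb', w, hw, haw, hbw⟩
    rw [jacoArc_iff] at haw hbw
    simp only [Finset.mem_Icc] at hw
    have hfa : b + 1 ≤ jf a := by omega
    refine ⟨three_le_of a b ha hab hfa, by omega, ?_, by omega⟩
    exact (jacoArc_iff a b).mpr ⟨ha, hab, by omega⟩
  · rintro ⟨h3, hbn, harc, hne⟩
    rw [jacoArc_iff] at harc
    have hfb := jf_ge b (by omega)
    have hfa : b + 1 ≤ jf a := by omega
    refine ⟨by omega, ?_, ?_, b + 1, ?_, ?_, ?_⟩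
    · simp only [Finset.mem_Icc]; omega
    · simp only [Finset.mem_Icc]; omega
    · simp only [Finset.mem_Icc]; omega
    · exact (jacoArc_iff a (b+1)).mpr ⟨ha, by omega, hfa⟩
    · exact (jacoArc_iff b (b+1)).mpr ⟨by omega, by omega, hfb⟩
end

section
/- Let n ≥ 3, let D be any orientation of the path P_n whose vertices are labelled bijectively by v_1, …, v_n, let v_s be an end vertex of the path, and let s_k be a predator-prey strategy on D with residual population r_{s_k}(D). Let D' be obtained from D by adding a new vertex v_{n+1} (with initial population n+1) joined to v_s by a single arc, oriented in either direction. Then there is a predator-prey strategy s*_k on D' (the minimal deviation of s_k accommodating v_{n+1}) whose residual population equals r_{s_k}(D) + (n+1) if v_s = v_1, and equals r_{s_k}(D) + (n−1) otherwise. -/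
/-- A state of the Grog algorithm: a finite set of remaining arcs (on vertices `v_1, v_2, …`,
identified with positive naturals) together with the current population of every vertex. -/
structure PPState where
  arcs : Finset (ℕ × ℕ)
  pop : ℕ → ℕ

/-- One predation step along the arc `a = (u, w)`: the arc is deleted and the populations
of `u` and `w` each decrease by `1`. -/
def predStep (s : PPState) (a : ℕ × ℕ) : PPState :=
  ⟨s.arcs.erase a, fun v => if v = a.1 ∨ v = a.2 then s.pop v - 1 else s.pop v⟩

/-- The arc `a` may be predated along in state `s`: it is a current arc and both of its
endpoints have current population at least `1`. -/
def validArc (s : PPState) (a : ℕ × ℕ) : Prop :=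
  a ∈ s.arcs ∧ 1 ≤ s.pop a.1 ∧ 1 ≤ s.pop a.2

/-- Run a sequence of predation steps from a state. -/
def runSeq : PPState → List (ℕ × ℕ) → PPState
  | s, [] => s
  | s, a :: l => runSeq (predStep s a) l

/-- The sequence of predation steps is valid from state `s`. -/
def ValidSeq : PPState → List (ℕ × ℕ) → Prop
  | _, [] => True
  | s, a :: l => validArc s a ∧ ValidSeq (predStep s a) l

/-- No further predation step is possible. -/
def Terminal (s : PPState) : Prop := ∀ a ∈ s.arcs, ¬ validArc s a

/-- A predator-prey strategy from state `s`: a maximal valid sequence of predation steps. -/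
def IsStrategy (s : PPState) (l : List (ℕ × ℕ)) : Prop :=
  ValidSeq s l ∧ Terminal (runSeq s l)

/-- The initial state of the digraph with arc set `A`, with initial populations `ρ(v_i) = i`. -/
def initState (A : Finset (ℕ × ℕ)) : PPState := ⟨A, id⟩

/-- The (residual) population of a state, summed over the vertices `v_1, …, v_n`. -/
def resid (n : ℕ) (s : PPState) : ℕ := ∑ v ∈ Finset.Icc 1 n, s.pop v

/-- The grog number of the digraph on `v_1, …, v_n` with arc set `A`: the minimum of the
residual population over all predator-prey strategies. -/
noncomputable def grogD (n : ℕ) (A : Finset (ℕ × ℕ)) : ℕ :=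
  sInf {r | ∃ l, IsStrategy (initState A) l ∧ resid n (runSeq (initState A) l) = r}

/-- `A` is an orientation of the labelled graph obtained from the simple graph `G` via the
bijective labelling `f` of its vertices by `v_1, …, v_n`. -/
def LabelledOrientation {V : Type*} (G : SimpleGraph V) (n : ℕ) (f : V → ℕ)
    (A : Finset (ℕ × ℕ)) : Prop :=
  Function.Injective f ∧ Set.range f = ↑(Finset.Icc 1 n) ∧
  (∀ u v, G.Adj u v ↔ ((f u, f v) ∈ A ∨ (f v, f u) ∈ A)) ∧
  (∀ u v, ¬(((f u, f v) ∈ A) ∧ ((f v, f u) ∈ A))) ∧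
  (∀ a ∈ A, ∃ u v, G.Adj u v ∧ a = (f u, f v))

/-- `A` is an orientation of the path `P_n` whose vertices, in path order, are labelled
`p 0, p 1, …, p (n-1)`, where `p` is a bijection onto `{1, …, n}`. -/
def PathOrientation (n : ℕ) (p : ℕ → ℕ) (A : Finset (ℕ × ℕ)) : Prop :=
  Set.BijOn p (Set.Iio n) (Set.Icc 1 n) ∧
  (∀ i, i + 1 < n →
    (((p i, p (i+1)) ∈ A ∨ (p (i+1), p i) ∈ A) ∧
      ¬(((p i, p (i+1)) ∈ A) ∧ ((p (i+1), p i) ∈ A)))) ∧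
  (∀ a ∈ A, ∃ i, i + 1 < n ∧ (a = (p i, p (i+1)) ∨ a = (p (i+1), p i)))

/-- `A` is an orientation of the cycle `C_n` whose vertices, in cyclic order, are labelled
`p 0, p 1, …, p (n-1)`, where `p` is a bijection onto `{1, …, n}`. -/
def CycleOrientation (n : ℕ) (p : ℕ → ℕ) (A : Finset (ℕ × ℕ)) : Prop :=
  Set.BijOn p (Set.Iio n) (Set.Icc 1 n) ∧
  (∀ i < n,
    (((p i, p ((i+1) % n)) ∈ A ∨ (p ((i+1) % n), p i) ∈ A) ∧
      ¬(((p i, p ((i+1) % n)) ∈ A) ∧ ((p ((i+1) % n), p i) ∈ A)))) ∧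
  (∀ a ∈ A, ∃ i < n, a = (p i, p ((i+1) % n)) ∨ a = (p ((i+1) % n), p i))


section Aux

lemma predStep_pop (s : PPState) (a : ℕ × ℕ) (v : ℕ) :
    (predStep s a).pop v = if v = a.1 ∨ v = a.2 then s.pop v - 1 else s.pop v := rfl

lemma predStep_arcs (s : PPState) (a : ℕ × ℕ) : (predStep s a).arcs = s.arcs.erase a := rfl

lemma runSeq_nil (s : PPState) : runSeq s [] = s := rfl

lemma runSeq_cons (s : PPState) (a : ℕ × ℕ) (l : List (ℕ × ℕ)) :
    runSeq s (a :: l) = runSeq (predStep s a) l := rfl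

lemma runSeq_append (l₁ l₂ : List (ℕ × ℕ)) : ∀ s, runSeq s (l₁ ++ l₂) = runSeq (runSeq s l₁) l₂ := by
  induction l₁ with
  | nil => intro s; rfl
  | cons a l ih => intro s; simpa [runSeq_cons] using ih (predStep s a)

lemma validSeq_append {l₁ l₂ : List (ℕ × ℕ)} : ∀ {s}, ValidSeq s l₁ →
    ValidSeq (runSeq s l₁) l₂ → ValidSeq s (l₁ ++ l₂) := by
  induction l₁ with
  | nil => intro s _ h; exact h
  | cons a l ih => intro s h1 h2; exact ⟨h1.1, ih h1.2 h2⟩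

lemma arcs_run_subset (l : List (ℕ × ℕ)) : ∀ s : PPState, (runSeq s l).arcs ⊆ s.arcs := by
  induction l with
  | nil => intro s; exact Finset.Subset.refl _
  | cons a l ih =>
    intro s
    exact (ih (predStep s a)).trans (Finset.erase_subset _ _)

lemma pop_run_le (l : List (ℕ × ℕ)) : ∀ (s : PPState) (v : ℕ), (runSeq s l).pop v ≤ s.pop v := by
  induction l with
  | nil => intro s v; exact le_refl _
  | cons a l ih =>
    intro s v
    refine (ih (predStep s a) v).trans ?_
    rw [predStep_pop]
    split <;> omega

lemma pop_run_eq_of_no_incident {v : ℕ} : ∀ {l : List (ℕ × ℕ)} {s : PPState}, ValidSeq s l →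
    (∀ a ∈ s.arcs, ¬(v = a.1 ∨ v = a.2)) → (runSeq s l).pop v = s.pop v := by
  intro l
  induction l with
  | nil => intro s _ _; rfl
  | cons a l ih =>
    intro s hv hno
    have hpop : (predStep s a).pop v = s.pop v := by
      rw [predStep_pop, if_neg (hno a hv.1.1)]
    have h2 : ∀ b ∈ (predStep s a).arcs, ¬(v = b.1 ∨ v = b.2) := by
      intro b hb
      exact hno b (Finset.mem_of_mem_erase hb)
    rw [runSeq_cons, ih hv.2 h2, hpop]

lemma pop_run_eq_unique {v : ℕ} {e0 : ℕ × ℕ} : ∀ {l : List (ℕ × ℕ)} {s : PPState}, ValidSeq s l →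
    (∀ a ∈ s.arcs, (v = a.1 ∨ v = a.2) → a = e0) → e0 ∈ (runSeq s l).arcs →
    (runSeq s l).pop v = s.pop v := by
  intro l
  induction l with
  | nil => intro s _ _ _; rfl
  | cons a l ih =>
    intro s hv hu he
    rw [runSeq_cons] at he ⊢
    have hane : a ≠ e0 := by
      rintro rfl
      have := arcs_run_subset l (predStep s a) he
      rw [predStep_arcs] at this
      exact Finset.notMem_erase a s.arcs this
    have hnoinc : ¬(v = a.1 ∨ v = a.2) := fun h => hane (hu a hv.1.1 h)
    have hpop : (predStep s a).pop v = s.pop v := by rw [predStep_pop, if_neg hnoinc]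
    have h2 : ∀ b ∈ (predStep s a).arcs, (v = b.1 ∨ v = b.2) → b = e0 := by
      intro b hb hbv
      exact hu b (Finset.mem_of_mem_erase hb) hbv
    rw [ih hv.2 h2 he, hpop]

lemma pop_run_lower1 {v : ℕ} {e0 : ℕ × ℕ} : ∀ {l : List (ℕ × ℕ)} {s : PPState}, ValidSeq s l →
    (∀ a ∈ s.arcs, (v = a.1 ∨ v = a.2) → a = e0) →
    s.pop v - 1 ≤ (runSeq s l).pop v := by
  intro l
  induction l with
  | nil => intro s _ _; rw [runSeq_nil]; omega
  | cons a l ih =>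
    intro s hv hu
    rw [runSeq_cons]
    by_cases hinc : v = a.1 ∨ v = a.2
    · have hae : a = e0 := hu a hv.1.1 hinc
      have hno : ∀ b ∈ (predStep s a).arcs, ¬(v = b.1 ∨ v = b.2) := by
        intro b hb hbv
        have hbe : b = e0 := hu b (Finset.mem_of_mem_erase hb) hbv
        rw [predStep_arcs, hae] at hb
        rw [hbe] at hb
        exact Finset.notMem_erase e0 s.arcs hb
      rw [pop_run_eq_of_no_incident hv.2 hno, predStep_pop, if_pos hinc]
    · have hpop : (predStep s a).pop v = s.pop v := by rw [predStep_pop, if_neg hinc]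
      have h2 : ∀ b ∈ (predStep s a).arcs, (v = b.1 ∨ v = b.2) → b = e0 := by
        intro b hb hbv
        exact hu b (Finset.mem_of_mem_erase hb) hbv
      have := ih hv.2 h2
      omega

lemma pop_run_lower2 {v : ℕ} {e0 e1 : ℕ × ℕ} : ∀ {l : List (ℕ × ℕ)} {s : PPState},
    ValidSeq s l →
    (∀ a ∈ s.arcs, (v = a.1 ∨ v = a.2) → a = e0 ∨ a = e1) → e0 ∈ (runSeq s l).arcs →
    s.pop v - 1 ≤ (runSeq s l).pop v := by
  intro l
  induction l with
  | nil => intro s _ _ _; rw [runSeq_nil]; omega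
  | cons a l ih =>
    intro s hv hu he
    rw [runSeq_cons] at he ⊢
    have hane : a ≠ e0 := by
      rintro rfl
      have := arcs_run_subset l (predStep s a) he
      rw [predStep_arcs] at this
      exact Finset.notMem_erase a s.arcs this
    by_cases hinc : v = a.1 ∨ v = a.2
    · have hae : a = e1 := (hu a hv.1.1 hinc).resolve_left hane
      have huniq : ∀ b ∈ (predStep s a).arcs, (v = b.1 ∨ v = b.2) → b = e0 := by
        intro b hb hbv
        rcases hu b (Finset.mem_of_mem_erase hb) hbv with h | h
        · exact h
        · rw [predStep_arcs, hae] at hb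
          rw [h] at hb
          exact absurd hb (Finset.notMem_erase e1 s.arcs)
      rw [pop_run_eq_unique hv.2 huniq he, predStep_pop, if_pos hinc]
    · have hpop : (predStep s a).pop v = s.pop v := by rw [predStep_pop, if_neg hinc]
      have h2 : ∀ b ∈ (predStep s a).arcs, (v = b.1 ∨ v = b.2) → b = e0 ∨ b = e1 := by
        intro b hb hbv
        exact hu b (Finset.mem_of_mem_erase hb) hbv
      have := ih hv.2 h2 he
      omega

lemma pop_run_lt {v : ℕ} {e0 : ℕ × ℕ} : ∀ {l : List (ℕ × ℕ)} {s : PPState}, ValidSeq s l →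
    e0 ∈ s.arcs → (v = e0.1 ∨ v = e0.2) → e0 ∉ (runSeq s l).arcs →
    (runSeq s l).pop v < s.pop v := by
  intro l
  induction l with
  | nil => intro s _ he _ hne; exact absurd he hne
  | cons a l ih =>
    intro s hv he hinc hne
    rw [runSeq_cons] at hne ⊢
    by_cases hae : a = e0
    · subst hae
      have h1 : 1 ≤ s.pop v := by
        rcases hinc with h | h
        · rw [h]; exact hv.1.2.1
        · rw [h]; exact hv.1.2.2
      have hstep : (predStep s a).pop v = s.pop v - 1 := by rw [predStep_pop, if_pos hinc]
      have := pop_run_le l (predStep s a) v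
      omega
    · have he' : e0 ∈ (predStep s a).arcs := by
        rw [predStep_arcs]
        exact Finset.mem_erase.mpr ⟨fun h => hae h.symm, he⟩
      have h1 := ih hv.2 he' hinc hne
      have h2 : (predStep s a).pop v ≤ s.pop v := by
        rw [predStep_pop]; split <;> omega
      omega

lemma coupling {e : ℕ × ℕ} : ∀ {l : List (ℕ × ℕ)} {s : PPState}, e ∉ s.arcs → ValidSeq s l →
    ValidSeq ⟨insert e s.arcs, s.pop⟩ l ∧
    runSeq ⟨insert e s.arcs, s.pop⟩ l = ⟨insert e (runSeq s l).arcs, (runSeq s l).pop⟩ := by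
  intro l
  induction l with
  | nil => intro s he _; exact ⟨trivial, rfl⟩
  | cons a l ih =>
    intro s he hv
    have hane : a ≠ e := fun h => he (h ▸ hv.1.1)
    have hstep : predStep ⟨insert e s.arcs, s.pop⟩ a =
        ⟨insert e (predStep s a).arcs, (predStep s a).pop⟩ := by
      simp only [predStep]
      congr 1
      rw [Finset.erase_insert_of_ne (fun h => hane h.symm)]
    have he' : e ∉ (predStep s a).arcs := by
      rw [predStep_arcs]
      exact fun h => he (Finset.mem_of_mem_erase h)
    have ihr := ih he' hv.2
    constructor
    · refine ⟨⟨Finset.mem_insert_of_mem hv.1.1, hv.1.2⟩, ?_⟩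
      rw [hstep]
      exact ihr.1
    · rw [runSeq_cons, hstep, ihr.2, runSeq_cons]

end Aux


set_option maxHeartbeats 1000000 in
/-- Structure at an end vertex `p k` of the path: the unique arc `e0` at `p k`, the neighbour
`u`, and an arc `e1` such that every arc at `u` is `e0` or `e1`. -/
lemma end_props (n : ℕ) (hn : 3 ≤ n) (p : ℕ → ℕ) (A : Finset (ℕ × ℕ))
    (hpath : PathOrientation n p A) (k : ℕ) (hk : k = 0 ∨ k = n - 1) :
    ∃ e0 u e1, e0 ∈ A ∧
      (e0 = (p k, u) ∨ e0 = (u, p k)) ∧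
      1 ≤ u ∧ u ≤ n ∧ u ≠ p k ∧
      (∀ a ∈ A, (p k = a.1 ∨ p k = a.2) → a = e0) ∧
      (∀ a ∈ A, (u = a.1 ∨ u = a.2) → a = e0 ∨ a = e1) := by
  obtain ⟨hbij, hadj, hcls⟩ := hpath
  have hinj : ∀ i j, i < n → j < n → p i = p j → i = j := fun i j hi hj h =>
    hbij.injOn (Set.mem_Iio.mpr hi) (Set.mem_Iio.mpr hj) h
  have hmem : ∀ i, i < n → 1 ≤ p i ∧ p i ≤ n := fun i hi => hbij.mapsTo (Set.mem_Iio.mpr hi)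
  have hclassify : ∀ j < n, ∀ a ∈ A, (p j = a.1 ∨ p j = a.2) →
      ∃ i, i + 1 < n ∧ (i = j ∨ i + 1 = j) ∧ (a = (p i, p (i+1)) ∨ a = (p (i+1), p i)) := by
    intro j hj a ha hinc
    obtain ⟨i, hi, hc⟩ := hcls a ha
    refine ⟨i, hi, ?_, hc⟩
    rcases hc with rfl | rfl <;> rcases hinc with h | h <;> simp only [Prod.fst, Prod.snd] at h
    · exact Or.inl (hinj j i hj (by omega) h).symm
    · exact Or.inr (hinj j (i+1) hj hi h).symm
    · exact Or.inr (hinj j (i+1) hj hi h).symm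
    · exact Or.inl (hinj j i hj (by omega) h).symm
  rcases hk with rfl | rfl
  · -- k = 0, u = p 1
    have h01 := hadj 0 (by omega)
    have h12 := hadj 1 (by omega)
    have hclass0 : ∀ a ∈ A, (p 0 = a.1 ∨ p 0 = a.2) → a = (p 0, p 1) ∨ a = (p 1, p 0) := by
      intro a ha hinc
      obtain ⟨i, hi, hij, hc⟩ := hclassify 0 (by omega) a ha hinc
      have : i = 0 := by omega
      subst this
      exact hc
    have hclass1 : ∀ a ∈ A, (p 1 = a.1 ∨ p 1 = a.2) →
        (a = (p 0, p 1) ∨ a = (p 1, p 0)) ∨ (a = (p 1, p 2) ∨ a = (p 2, p 1)) := by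
      intro a ha hinc
      obtain ⟨i, hi, hij, hc⟩ := hclassify 1 (by omega) a ha hinc
      have : i = 1 ∨ i = 0 := by omega
      rcases this with rfl | rfl
      · exact Or.inr hc
      · exact Or.inl hc
    have hu1 : p 1 ≠ p 0 := fun h => by have := hinj 1 0 (by omega) (by omega) h; omega
    obtain ⟨e0, he0A, he0eq, he0uniq⟩ :
        ∃ e0, e0 ∈ A ∧ (e0 = (p 0, p 1) ∨ e0 = (p 1, p 0)) ∧
          ∀ a ∈ A, a = (p 0, p 1) ∨ a = (p 1, p 0) → a = e0 := by
      rcases h01.1 with h | h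
      · exact ⟨(p 0, p 1), h, Or.inl rfl, fun a ha hc => hc.resolve_right
          (fun h' => h01.2 ⟨h, h' ▸ ha⟩)⟩
      · exact ⟨(p 1, p 0), h, Or.inr rfl, fun a ha hc => hc.resolve_left
          (fun h' => h01.2 ⟨h' ▸ ha, h⟩)⟩
    obtain ⟨e1, he1uniq⟩ :
        ∃ e1, ∀ a ∈ A, a = (p 1, p 2) ∨ a = (p 2, p 1) → a = e1 := by
      rcases h12.1 with h | h
      · exact ⟨(p 1, p 2), fun a ha hc => hc.resolve_right
          (fun h' => h12.2 ⟨h, h' ▸ ha⟩)⟩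
      · exact ⟨(p 2, p 1), fun a ha hc => hc.resolve_left
          (fun h' => h12.2 ⟨h' ▸ ha, h⟩)⟩
    refine ⟨e0, p 1, e1, he0A, ?_, (hmem 1 (by omega)).1, (hmem 1 (by omega)).2, hu1,
      fun a ha h => he0uniq a ha (hclass0 a ha h), fun a ha h => ?_⟩
    · rcases he0eq with rfl | rfl
      · exact Or.inl rfl
      · exact Or.inr rfl
    · rcases hclass1 a ha h with h' | h'
      · exact Or.inl (he0uniq a ha h')
      · exact Or.inr (he1uniq a ha h')
  · -- k = n - 1, u = p (n-2)
    have e2 : n - 2 + 1 = n - 1 := by omega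
    have e3 : n - 3 + 1 = n - 2 := by omega
    have h01 := hadj (n-2) (by omega)
    have h12 := hadj (n-3) (by omega)
    rw [e2] at h01
    rw [e3] at h12
    have hclass0 : ∀ a ∈ A, (p (n-1) = a.1 ∨ p (n-1) = a.2) →
        a = (p (n-2), p (n-1)) ∨ a = (p (n-1), p (n-2)) := by
      intro a ha hinc
      obtain ⟨i, hi, hij, hc⟩ := hclassify (n-1) (by omega) a ha hinc
      have hieq : i = n - 2 := by omega
      subst hieq
      rw [e2] at hc
      exact hc
    have hclass1 : ∀ a ∈ A, (p (n-2) = a.1 ∨ p (n-2) = a.2) →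
        (a = (p (n-2), p (n-1)) ∨ a = (p (n-1), p (n-2))) ∨
        (a = (p (n-3), p (n-2)) ∨ a = (p (n-2), p (n-3))) := by
      intro a ha hinc
      obtain ⟨i, hi, hij, hc⟩ := hclassify (n-2) (by omega) a ha hinc
      have : i = n - 2 ∨ i = n - 3 := by omega
      rcases this with rfl | rfl
      · rw [e2] at hc; exact Or.inl hc
      · rw [e3] at hc; exact Or.inr hc
    have hu1 : p (n-2) ≠ p (n-1) := fun h => by
      have := hinj (n-2) (n-1) (by omega) (by omega) h; omega
    obtain ⟨e0, he0A, he0eq, he0uniq⟩ :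
        ∃ e0, e0 ∈ A ∧ (e0 = (p (n-1), p (n-2)) ∨ e0 = (p (n-2), p (n-1))) ∧
          ∀ a ∈ A, a = (p (n-2), p (n-1)) ∨ a = (p (n-1), p (n-2)) → a = e0 := by
      rcases h01.1 with h | h
      · exact ⟨(p (n-2), p (n-1)), h, Or.inr rfl, fun a ha hc => hc.resolve_right
          (fun h' => h01.2 ⟨h, h' ▸ ha⟩)⟩
      · exact ⟨(p (n-1), p (n-2)), h, Or.inl rfl, fun a ha hc => hc.resolve_left
          (fun h' => h01.2 ⟨h' ▸ ha, h⟩)⟩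
    obtain ⟨e1, he1uniq⟩ :
        ∃ e1, ∀ a ∈ A, a = (p (n-3), p (n-2)) ∨ a = (p (n-2), p (n-3)) → a = e1 := by
      rcases h12.1 with h | h
      · exact ⟨(p (n-3), p (n-2)), fun a ha hc => hc.resolve_right
          (fun h' => h12.2 ⟨h, h' ▸ ha⟩)⟩
      · exact ⟨(p (n-2), p (n-3)), fun a ha hc => hc.resolve_left
          (fun h' => h12.2 ⟨h' ▸ ha, h⟩)⟩
    refine ⟨e0, p (n-2), e1, he0A, ?_, (hmem (n-2) (by omega)).1, (hmem (n-2) (by omega)).2, hu1,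
      fun a ha h => he0uniq a ha (hclass0 a ha h), fun a ha h => ?_⟩
    · rcases he0eq with rfl | rfl
      · exact Or.inl rfl
      · exact Or.inr rfl
    · rcases hclass1 a ha h with h' | h'
      · exact Or.inl (he0uniq a ha h')
      · exact Or.inr (he1uniq a ha h')

/-- Let `n ≥ 3`, let `A` be an orientation of the path `P_n` (vertices
labelled bijectively by `v_1, …, v_n` via `p`), let `v_s` be an end vertex of the path, and
let `l` be a predator-prey strategy on `D = (A, ρ)`. If `A'` is obtained from `A` by adding
a new vertex `v_{n+1}` joined to `v_s` by a single arc (in either direction), then there is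
a predator-prey strategy on `D' = (A', ρ)` whose residual population equals
`r_l(D) + (n+1)` if `v_s = v_1`, and `r_l(D) + (n-1)` otherwise. -/
theorem path_extension_at_end_vertex (n : ℕ) (hn : 3 ≤ n) (p : ℕ → ℕ)
    (A : Finset (ℕ × ℕ)) (hpath : PathOrientation n p A)
    (vs : ℕ) (hvs : vs = p 0 ∨ vs = p (n - 1))
    (A' : Finset (ℕ × ℕ))
    (hA' : A' = insert (vs, n + 1) A ∨ A' = insert (n + 1, vs) A)
    (l : List (ℕ × ℕ)) (hl : IsStrategy (initState A) l) :
    ∃ l' : List (ℕ × ℕ), IsStrategy (initState A') l' ∧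
      resid (n + 1) (runSeq (initState A') l') =
        resid n (runSeq (initState A) l) + (if vs = 1 then n + 1 else n - 1) := by
  obtain ⟨hval, hterm⟩ := hl
  have hbij := hpath.1
  have hcls := hpath.2.2
  have hmem : ∀ i, i < n → 1 ≤ p i ∧ p i ≤ n := fun i hi => hbij.mapsTo (Set.mem_Iio.mpr hi)
  have hAle : ∀ a ∈ A, a.1 ≤ n ∧ a.2 ≤ n := by
    intro a ha
    obtain ⟨i, hi, hc⟩ := hcls a ha
    have h1 := hmem i (by omega)
    have h2 := hmem (i+1) hi
    rcases hc with rfl | rfl <;> dsimp only <;> omega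
  obtain ⟨k, hklt, hvsk⟩ : ∃ k, (k = 0 ∨ k = n - 1) ∧ vs = p k := by
    rcases hvs with h | h
    · exact ⟨0, Or.inl rfl, h⟩
    · exact ⟨n - 1, Or.inr rfl, h⟩
  obtain ⟨e0, u, e1, he0A, he0eq, hu1, hun, hune, huniq0, huniq1⟩ := end_props n hn p A hpath k hklt
  have hkltn : k < n := by omega
  have hvs1n : 1 ≤ vs ∧ vs ≤ n := hvsk ▸ hmem k hkltn
  obtain ⟨e, hA'e, hend⟩ : ∃ e : ℕ × ℕ, A' = insert e A ∧
      ((e.1 = vs ∧ e.2 = n + 1) ∨ (e.1 = n + 1 ∧ e.2 = vs)) := by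
    rcases hA' with h | h
    · exact ⟨(vs, n + 1), h, Or.inl ⟨rfl, rfl⟩⟩
    · exact ⟨(n + 1, vs), h, Or.inr ⟨rfl, rfl⟩⟩
  subst hA'e
  have heA : e ∉ A := by
    intro h
    have := hAle e h
    rcases hend with ⟨h1, h2⟩ | ⟨h1, h2⟩ <;> omega
  have hcoup := coupling (s := initState A) (e := e) heA hval
  have hrun' : runSeq (initState (insert e A)) l =
      ⟨insert e (runSeq (initState A) l).arcs, (runSeq (initState A) l).pop⟩ := hcoup.2
  have hval' : ValidSeq (initState (insert e A)) l := hcoup.1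
  have hFsub : (runSeq (initState A) l).arcs ⊆ A := arcs_run_subset l (initState A)
  have heF : e ∉ (runSeq (initState A) l).arcs := fun h => heA (hFsub h)
  have hpopn1 : (runSeq (initState A) l).pop (n + 1) = n + 1 := by
    have h := pop_run_eq_of_no_incident (v := n + 1) hval
      (fun a ha hx => by have := hAle a ha; omega)
    exact h.trans rfl
  have hendiff : ∀ x : ℕ, (x = e.1 ∨ x = e.2) ↔ (x = vs ∨ x = n + 1) := by
    intro x
    rcases hend with ⟨h1, h2⟩ | ⟨h1, h2⟩ <;> rw [h1, h2] <;> tauto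
  by_cases hvs1 : vs = 1
  · -- case vs = 1 : the strategy l itself works on the extended digraph
    subst hvs1
    have hpk1 : p k = 1 := hvsk.symm
    rw [hpk1] at he0eq hune
    have hF1le : (runSeq (initState A) l).pop 1 ≤ 1 := pop_run_le l (initState A) 1
    have hF1z : (runSeq (initState A) l).pop 1 = 0 := by
      by_contra hne
      have hF1 : (runSeq (initState A) l).pop 1 = 1 := by omega
      have hinc0 : (1 : ℕ) = e0.1 ∨ 1 = e0.2 := by
        rcases he0eq with rfl | rfl
        · exact Or.inl rfl
        · exact Or.inr rfl
      have he0F : e0 ∈ (runSeq (initState A) l).arcs := by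
        by_contra he0F
        have hlt := pop_run_lt hval he0A hinc0 he0F
        have hi1 : (initState A).pop 1 = 1 := rfl
        omega
      have hu2 : 2 ≤ u := by omega
      have hFu : u - 1 ≤ (runSeq (initState A) l).pop u :=
        pop_run_lower2 hval huniq1 he0F
      refine hterm e0 he0F ⟨he0F, ?_, ?_⟩ <;> rcases he0eq with rfl | rfl <;> dsimp only <;> omega
    refine ⟨l, ⟨hval', ?_⟩, ?_⟩
    · -- terminality on the extended digraph
      rw [hrun']
      intro a ha hva
      rcases Finset.mem_insert.mp ha with rfl | haF
      · obtain ⟨-, hp1, hp2⟩ := hva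
        dsimp only at hp1 hp2
        rcases hend with ⟨h1, h2⟩ | ⟨h1, h2⟩
        · rw [h1] at hp1; omega
        · rw [h2] at hp2; omega
      · obtain ⟨-, hp1, hp2⟩ := hva
        dsimp only at hp1 hp2
        exact hterm a haF ⟨haF, hp1, hp2⟩
    · rw [hrun']
      have hite : (if (1 : ℕ) = 1 then n + 1 else n - 1) = n + 1 := if_pos rfl
      rw [hite]
      show (∑ v ∈ Finset.Icc 1 (n + 1), (runSeq (initState A) l).pop v)
        = (∑ v ∈ Finset.Icc 1 n, (runSeq (initState A) l).pop v) + (n + 1)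
      rw [Finset.sum_Icc_succ_top (by omega : 1 ≤ n + 1), hpopn1]
  · -- case vs ≠ 1 : append the new arc at the end of l
    have hvs2 : 2 ≤ vs := by omega
    have huniqvs : ∀ a ∈ (initState A).arcs, (vs = a.1 ∨ vs = a.2) → a = e0 := by
      intro a ha h
      rw [hvsk] at h
      exact huniq0 a ha h
    have hFvs : vs - 1 ≤ (runSeq (initState A) l).pop vs :=
      pop_run_lower1 hval huniqvs
    have h1F : 1 ≤ (runSeq (initState A) l).pop vs := by omega
    refine ⟨l ++ [e], ⟨?_, ?_⟩, ?_⟩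
    · apply validSeq_append hval'
      rw [hrun']
      refine ⟨⟨Finset.mem_insert_self e _, ?_, ?_⟩, trivial⟩ <;> dsimp only <;>
        rcases hend with ⟨h1, h2⟩ | ⟨h1, h2⟩ <;> simp only [h1, h2] <;> omega
    · rw [runSeq_append, hrun', runSeq_cons, runSeq_nil]
      intro a ha hva
      have ha' : a ∈ (runSeq (initState A) l).arcs := by
        rw [predStep_arcs] at ha
        dsimp only at ha
        rwa [Finset.erase_insert heF] at ha
      obtain ⟨-, hp1, hp2⟩ := hva
      rw [predStep_pop] at hp1 hp2
      dsimp only at hp1 hp2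
      refine hterm a ha' ⟨ha', ?_, ?_⟩
      · split at hp1 <;> omega
      · split at hp2 <;> omega
    · rw [runSeq_append, hrun', runSeq_cons, runSeq_nil, if_neg hvs1]
      have hvsmem : vs ∈ Finset.Icc 1 n := Finset.mem_Icc.mpr ⟨by omega, by omega⟩
      set F := runSeq (initState A) l with hFdef
      set G := predStep (⟨insert e F.arcs, F.pop⟩ : PPState) e with hGdef
      have hGpop : ∀ v, G.pop v = if v = vs ∨ v = n + 1 then F.pop v - 1 else F.pop v := by
        intro v
        rw [hGdef, predStep_pop]
        by_cases h : v = e.1 ∨ v = e.2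
        · rw [if_pos h, if_pos ((hendiff v).mp h)]
        · rw [if_neg h, if_neg (fun hh => h ((hendiff v).mpr hh))]
      have hGn1 : G.pop (n + 1) = n := by
        rw [hGpop, if_pos (Or.inr rfl)]
        omega
      have hGvs : G.pop vs = F.pop vs - 1 := by
        rw [hGpop, if_pos (Or.inl rfl)]
      have hsum1 : (∑ v ∈ Finset.Icc 1 (n + 1), G.pop v)
          = (∑ v ∈ Finset.Icc 1 n, G.pop v) + G.pop (n + 1) :=
        Finset.sum_Icc_succ_top (by omega) _
      have hsplitG := Finset.sum_erase_add (Finset.Icc 1 n) G.pop hvsmem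
      have hsplitF := Finset.sum_erase_add (Finset.Icc 1 n) F.pop hvsmem
      have hsame : (∑ v ∈ (Finset.Icc 1 n).erase vs, G.pop v)
          = ∑ v ∈ (Finset.Icc 1 n).erase vs, F.pop v := by
        refine Finset.sum_congr rfl (fun v hv => ?_)
        have h1 : v ≠ vs := (Finset.mem_erase.mp hv).1
        have h2 : v ≤ n := (Finset.mem_Icc.mp (Finset.mem_erase.mp hv).2).2
        rw [hGpop, if_neg (by omega)]
      show (∑ v ∈ Finset.Icc 1 (n + 1), G.pop v) = (∑ v ∈ Finset.Icc 1 n, F.pop v) + (n - 1)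
      omega
end
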